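/- Let C be a pretriangulated category with weight structure and m ≤ n integers. Let A → M → B → A[1] and A′ → M′ → B′ → A′[1] be distinguished triangles with A, A′ ∈ C_{w≤m−1} and B, B′ ∈ C_{w≥n+1} (i.e. weight filtrations of M and M′ avoiding weights m,…,n). Then every morphism f : M → M′ extends to a morphism of triangles (a, f, b) with a : A → A′ and b : B → B′, and the morphisms a and b are uniquely determined by f. In particular, a weight filtration of M avoiding weights m,…,n is unique up to unique isomorphism. (Functoriality of weight filtrations avoiding weights, used throughout the paper; cf. [W4, Prop. 1.7, Cor. 1.9].) -/

import Mathlib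

set_option linter.unusedVariables false

open CategoryTheory Limits Pretriangulated

universe w₁ w₂ w₃ w₄ v₁ v₂ v₃ v₄ u₁ u₂ u₃ u₄

/-- A weight structure on a pretriangulated category `C`: a pair of classes of objects
`(C_{w≤0}, C_{w≥0})`, each containing the zero objects and closed under isomorphisms and
retracts (direct summands), such that `C_{w≤0}[-1] ⊆ C_{w≤0}`, `C_{w≥0}[1] ⊆ C_{w≥0}`,
`Hom(A, B[1]) = 0` for `A ∈ C_{w≤0}`, `B ∈ C_{w≥0}`, and every object admits a weight
filtration. -/
structure WeightStructure (C : Type*) [Category C] [HasZeroObject C] [Preadditive C]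
    [HasShift C ℤ] [∀ n : ℤ, (shiftFunctor C n).Additive] [Pretriangulated C] where
  le : C → Prop
  ge : C → Prop
  le_zero : ∀ X : C, IsZero X → le X
  ge_zero : ∀ X : C, IsZero X → ge X
  le_iso : ∀ {X Y : C}, (X ≅ Y) → le X → le Y
  ge_iso : ∀ {X Y : C}, (X ≅ Y) → ge X → ge Y
  le_retract : ∀ {X Y : C} (s : X ⟶ Y) (r : Y ⟶ X), s ≫ r = 𝟙 X → le Y → le X
  ge_retract : ∀ {X Y : C} (s : X ⟶ Y) (r : Y ⟶ X), s ≫ r = 𝟙 X → ge Y → ge X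
  le_shift : ∀ X : C, le X → le (X⟦(-1 : ℤ)⟧)
  ge_shift : ∀ X : C, ge X → ge (X⟦(1 : ℤ)⟧)
  orth : ∀ {A B : C} (f : A ⟶ B⟦(1 : ℤ)⟧), le A → ge B → f = 0
  exists_weight_filtration : ∀ M : C, ∃ (A B : C) (f : A ⟶ M) (g : M ⟶ B)
    (h : B ⟶ A⟦(1 : ℤ)⟧), (Triangle.mk f g h ∈ distTriang C) ∧ le A ∧ ge (B⟦(-1 : ℤ)⟧)

namespace WeightStructure

variable {C : Type*} [Category C] [HasZeroObject C] [Preadditive C]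
    [HasShift C ℤ] [∀ n : ℤ, (shiftFunctor C n).Additive] [Pretriangulated C]

/-- `X ∈ C_{w ≤ n}`, i.e. `X[-n] ∈ C_{w ≤ 0}`. -/
def leW (w : WeightStructure C) (n : ℤ) (X : C) : Prop := w.le (X⟦(-n : ℤ)⟧)

/-- `X ∈ C_{w ≥ n}`, i.e. `X[-n] ∈ C_{w ≥ 0}`. -/
def geW (w : WeightStructure C) (n : ℤ) (X : C) : Prop := w.ge (X⟦(-n : ℤ)⟧)

/-- The heart `C_{w = 0}`. -/
def heart (w : WeightStructure C) (X : C) : Prop := w.le X ∧ w.ge X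

/-- `M` is without weights `m, …, n`: there is a distinguished triangle
`M_{≤ m-1} → M → M_{≥ n+1} → M_{≤ m-1}[1]` with `M_{≤ m-1} ∈ C_{w ≤ m-1}` and
`M_{≥ n+1} ∈ C_{w ≥ n+1}` (a weight filtration avoiding weights `m, …, n`). -/
def WithoutWeights (w : WeightStructure C) (m n : ℤ) (M : C) : Prop :=
  ∃ (A B : C) (f : A ⟶ M) (g : M ⟶ B) (h : B ⟶ A⟦(1 : ℤ)⟧),
    (Triangle.mk f g h ∈ distTriang C) ∧ w.leW (m - 1) A ∧ w.geW (n + 1) B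

end WeightStructure

/-- A weight-exact (exact) functor between pretriangulated categories equipped with
weight structures: `F(C_{w≤0}) ⊆ D_{w≤0}` and `F(C_{w≥0}) ⊆ D_{w≥0}`. -/
def WeightExact {C : Type*} [Category C] [HasZeroObject C] [Preadditive C]
    [HasShift C ℤ] [∀ n : ℤ, (shiftFunctor C n).Additive] [Pretriangulated C]
    {D : Type*} [Category D] [HasZeroObject D] [Preadditive D]
    [HasShift D ℤ] [∀ n : ℤ, (shiftFunctor D n).Additive] [Pretriangulated D]
    (wC : WeightStructure C) (wD : WeightStructure D) (F : C ⥤ D) : Prop :=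
  (∀ X : C, wC.le X → wD.le (F.obj X)) ∧ (∀ X : C, wC.ge X → wD.ge (F.obj X))

/-!
Everything comes from the orthogonality `Hom(C_{w ≤ p}, C_{w ≥ q}) = 0` for `p < q`, obtained
from axiom (ii) after shifting. Since `m ≤ n`, the groups `Hom(A, B')`, `Hom(A, B'[-1])` and
`Hom(A[1], B')` all vanish. The first kills `f ≫ φ ≫ g'`, so `f ≫ φ` lifts along `f'` and the
triangle axiom completes the lift to a morphism of triangles; the other two kill the morphisms
through which the difference of two choices of `a`, resp. `b`, must factor by the long exact
Hom sequences of the triangles.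
-/

section TriangleHomExt

-- Qualified: in the `Triangle` namespace `shiftFunctor` would be `Triangle.shiftFunctor`.
variable {C : Type*} [Category C] [HasZeroObject C] [Preadditive C]
    [HasShift C ℤ] [∀ n : ℤ, (CategoryTheory.shiftFunctor C n).Additive] [Pretriangulated C]

lemma CategoryTheory.Pretriangulated.Triangle.eq_zero_of_comp_mor₁_eq_zero {T : Triangle C}
    (hT : T ∈ distTriang C) {X : C} (hX : ∀ e : X ⟶ T.obj₃⟦(-1 : ℤ)⟧, e = 0) (a : X ⟶ T.obj₁)
    (ha : a ≫ T.mor₁ = 0) : a = 0 := by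
  obtain ⟨e, rfl⟩ := Triangle.coyoneda_exact₂ _ (inv_rot_of_distTriang _ hT) a ha
  rw [hX e]
  exact zero_comp

lemma CategoryTheory.Pretriangulated.Triangle.eq_zero_of_mor₂_comp_eq_zero {T : Triangle C}
    (hT : T ∈ distTriang C) {Y : C} (hY : ∀ e : T.obj₁⟦(1 : ℤ)⟧ ⟶ Y, e = 0) (b : T.obj₃ ⟶ Y)
    (hb : T.mor₂ ≫ b = 0) : b = 0 := by
  obtain ⟨e, rfl⟩ := Triangle.yoneda_exact₃ _ hT b hb
  rw [hY e]
  exact comp_zero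

end TriangleHomExt

namespace WeightStructure

variable {C : Type*} [Category C] [HasZeroObject C] [Preadditive C]
    [HasShift C ℤ] [∀ n : ℤ, (shiftFunctor C n).Additive] [Pretriangulated C]
    (w : WeightStructure C)

lemma geW_antitone (X : C) : Antitone (w.geW · X) :=
  antitone_int_of_succ_le fun n hX =>
    w.ge_iso ((shiftFunctorAdd' C (-(n + 1)) 1 (-n) (by ring)).app X).symm (w.ge_shift _ hX)

lemma leW_shift {n n' k : ℤ} (h : n + k = n') {X : C} (hX : w.leW n X) : w.leW n' (X⟦k⟧) :=
  w.le_iso ((shiftFunctorAdd' C k (-n') (-n) (by omega)).app X) hX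

lemma geW_shift {n n' k : ℤ} (h : n + k = n') {X : C} (hX : w.geW n X) : w.geW n' (X⟦k⟧) :=
  w.ge_iso ((shiftFunctorAdd' C k (-n') (-n) (by omega)).app X) hX

lemma hom_eq_zero_of_leW_of_geW {p q : ℤ} (hpq : p < q) {X Y : C} (hX : w.leW p X)
    (hY : w.geW q Y) (φ : X ⟶ Y) : φ = 0 := by
  have hY' : w.geW (p + 1) Y := w.geW_antitone Y (by omega) hY
  have e := (shiftFunctorAdd' C (-(p + 1)) 1 (-p) (by ring)).app Y
  have hφ : (shiftFunctor C (-p)).map φ ≫ e.hom = 0 := w.orth _ hX hY'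
  rw [Preadditive.IsIso.comp_right_eq_zero, Functor.map_eq_zero_iff] at hφ
  exact hφ

end WeightStructure

/-- **Functoriality and uniqueness of weight filtrations avoiding weights `m, …, n`**
(cf. [W4, Prop. 1.7, Cor. 1.9]). Given two weight filtrations avoiding weights `m, …, n`
of `M` and `M'`, every morphism `φ : M → M'` extends to a morphism of triangles
`(a, φ, b)`, and `a`, `b` are uniquely determined by `φ`. -/
theorem weight_filtration_functoriality
    {C : Type*} [Category C] [HasZeroObject C] [Preadditive C]
    [HasShift C ℤ] [∀ n : ℤ, (shiftFunctor C n).Additive] [Pretriangulated C]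
    (w : WeightStructure C) (m n : ℤ) (hmn : m ≤ n)
    (A M B : C) (f : A ⟶ M) (g : M ⟶ B) (h : B ⟶ A⟦(1 : ℤ)⟧)
    (hT : Triangle.mk f g h ∈ distTriang C)
    (A' M' B' : C) (f' : A' ⟶ M') (g' : M' ⟶ B') (h' : B' ⟶ A'⟦(1 : ℤ)⟧)
    (hT' : Triangle.mk f' g' h' ∈ distTriang C)
    (hA : w.leW (m - 1) A) (hA' : w.leW (m - 1) A')
    (hB : w.geW (n + 1) B) (hB' : w.geW (n + 1) B')
    (φ : M ⟶ M') :
    (∃ (a : A ⟶ A') (b : B ⟶ B'),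
      a ≫ f' = f ≫ φ ∧ g ≫ b = φ ≫ g' ∧
        h ≫ (shiftFunctor C (1 : ℤ)).map a = b ≫ h') ∧
    (∀ a₁ a₂ : A ⟶ A', a₁ ≫ f' = f ≫ φ → a₂ ≫ f' = f ≫ φ → a₁ = a₂) ∧
    (∀ b₁ b₂ : B ⟶ B', g ≫ b₁ = φ ≫ g' → g ≫ b₂ = φ ≫ g' → b₁ = b₂) := by
  refine ⟨?_, fun a₁ a₂ h₁ h₂ => ?_, fun b₁ b₂ h₁ h₂ => ?_⟩
  · have hfφg' : f ≫ φ ≫ g' = 0 := w.hom_eq_zero_of_leW_of_geW (by omega) hA hB' _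
    obtain ⟨a, ha⟩ :=
      Triangle.coyoneda_exact₂ _ hT' (f ≫ φ) ((Category.assoc _ _ _).trans hfφg')
    obtain ⟨b, hb₂, hb₃⟩ :=
      complete_distinguished_triangle_morphism _ _ hT hT' a φ ha
    exact ⟨a, b, ha.symm, hb₂, hb₃⟩
  · exact sub_eq_zero.mp (Triangle.eq_zero_of_comp_mor₁_eq_zero hT'
      (w.hom_eq_zero_of_leW_of_geW (q := n) (by omega) hA (w.geW_shift (by omega) hB')) _
      (show (a₁ - a₂) ≫ f' = 0 by rw [Preadditive.sub_comp, h₁, h₂, sub_self]))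
  · exact sub_eq_zero.mp (Triangle.eq_zero_of_mor₂_comp_eq_zero hT
      (w.hom_eq_zero_of_leW_of_geW (p := m) (by omega) (w.leW_shift (by omega) hA) hB') _
      (show g ≫ (b₁ - b₂) = 0 by rw [Preadditive.comp_sub, h₁, h₂, sub_self]))
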